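/- Let π be a Markovian policy on a finite-horizon Markov game skeleton such that for every stage (h, s) and every player i, either exactly one action j ∈ A_i has p^{h,s}_{ij} > 0, or there exist j, k ∈ A_i with j ≠ k, p^{h,s}_{ij} > 0, p^{h,s}_{ik} > 0, and σ^{h,s}_{ij} ≠ σ^{h,s}_{ik}. Then for every B > 0 there exists a reward function r with |r_{i,h}(s,a)| ≤ B for all i, h, s, a such that for every player i, every h ∈ {1, …, H}, every s ∈ S, and every deterministic Markov deviation d for player i satisfying p^{h',s'}_{i, d(h',s')} < 1 for all stages (h', s'), one has V^π_{i,h}(s) > V^{d}_{i,h}(s). -/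

import Mathlib

/-!
At a stage with joint distribution `σ`, reward player `i` by the witness utility
`w_i(j, a_{-i}) = σ_{ij}(a_{-i}) / ‖σ_{ij}‖₂`. Obeying `σ` then earns `∑_k p_k ‖σ_{ik}‖₂`, while
always playing `j` earns `∑_k p_k ⟨σ_{ik}, σ_{ij}⟩ / ‖σ_{ij}‖₂`; the loss `∑_k p_k t_{ikj}` is
nonnegative by Cauchy–Schwarz. If `p_{ij} < 1`, the hypothesis provides a supported `k` with
`σ_{ik} ≠ σ_{ij}`, and Cauchy–Schwarz is strict for distinct probability vectors, so the loss is
positive, hence at least some `δ > 0` uniformly over the finitely many stages and actions.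
Damping the stage-`h` reward by `γ^h` with `γ ≤ 1/2` and `4γ < δ` bounds every continuation value
by `2Bγ^{h+1}`, which the immediate loss `Bγ^h δ` outweighs.
-/

open scoped BigOperators

section Prelim

variable {n : ℕ}

/-- Joint action obtained from player `i`'s action `j` and the other players' actions `b`,
i.e. the joint action `(j, a_{-i})`. -/
def joinA {A : Fin n → Type*} (i : Fin n) (j : A i)
    (b : ∀ l : {l : Fin n // l ≠ i}, A l) : ∀ l, A l :=
  fun l => if h : l = i then h.symm ▸ j else b ⟨l, h⟩

/-- The actions `a_{-i}` of all players other than `i` in the joint action `a`. -/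
def restr {A : Fin n → Type*} (i : Fin n) (a : ∀ l, A l) :
    ∀ l : {l : Fin n // l ≠ i}, A l :=
  fun l => a l

/-- `σ` is a mixed strategy: nonnegative and sums to one. -/
def IsMixed {X : Type*} [Fintype X] (σ : X → ℝ) : Prop :=
  (∀ x, 0 ≤ σ x) ∧ ∑ x, σ x = 1

/-- Marginal probability `p_{ij}` that player `i` plays `j` under `σ`. -/
noncomputable def marg {A : Fin n → Type*} [∀ l, Fintype (A l)]
    (σ : (∀ l, A l) → ℝ) (i : Fin n) (j : A i) : ℝ :=
  ∑ b : ∀ l : {l : Fin n // l ≠ i}, A l, σ (joinA i j b)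

/-- Conditional distribution `σ_{ij}` over the other players' actions:
`σ_{ij}(a_{-i}) = σ(j, a_{-i}) / p_{ij}` if `p_{ij} > 0`, and the zero function otherwise. -/
noncomputable def condl {A : Fin n → Type*} [∀ l, Fintype (A l)]
    (σ : (∀ l, A l) → ℝ) (i : Fin n) (j : A i) :
    (∀ l : {l : Fin n // l ≠ i}, A l) → ℝ :=
  fun b => if 0 < marg σ i j then σ (joinA i j b) / marg σ i j else 0

/-- Euclidean norm `‖·‖₂` on `ℝ^X`. -/
noncomputable def norm2 {X : Type*} [Fintype X] (f : X → ℝ) : ℝ :=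
  Real.sqrt (∑ x, f x ^ 2)

/-- Euclidean inner product `⟨·,·⟩` on `ℝ^X`. -/
noncomputable def inner2 {X : Type*} [Fintype X] (f g : X → ℝ) : ℝ :=
  ∑ x, f x * g x

/-- The witness utility `w_i(j, a_{-i}) = σ_{ij}(a_{-i}) / ‖σ_{ij}‖₂` if `p_{ij} > 0`,
and `0` otherwise. -/
noncomputable def wit {A : Fin n → Type*} [∀ l, Fintype (A l)]
    (σ : (∀ l, A l) → ℝ) (i : Fin n) (a : ∀ l, A l) : ℝ :=
  if 0 < marg σ i (a i) then condl σ i (a i) (restr i a) / norm2 (condl σ i (a i)) else 0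

open Classical in
/-- `t_{ijk} = ‖σ_{ij}‖₂ - ⟨σ_{ij}, σ_{ik}⟩ / ‖σ_{ik}‖₂` if `σ_{ik} ≠ 0`,
and `t_{ijk} = ‖σ_{ij}‖₂` if `σ_{ik} = 0`. -/
noncomputable def tq {A : Fin n → Type*} [∀ l, Fintype (A l)]
    (σ : (∀ l, A l) → ℝ) (i : Fin n) (j k : A i) : ℝ :=
  if condl σ i k = 0 then norm2 (condl σ i j)
  else norm2 (condl σ i j) - inner2 (condl σ i j) (condl σ i k) / norm2 (condl σ i k)

end Prelim

section MG

variable {n : ℕ} {A : Fin n → Type*} [∀ l, Fintype (A l)]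
  {S : Type*} [Fintype S] {H : ℕ}

/-- On-policy value, by backward recursion: `V_{H+1} = 0` and
`V_h(s) = ∑_a π_h(s)(a) [ rᵢ_h(s,a) + ∑_{s'} P_h(s,a)(s') V_{h+1}(s') ]`. -/
noncomputable def Vpol (P : Fin H → S → (∀ l, A l) → S → ℝ)
    (π : Fin H → S → (∀ l, A l) → ℝ)
    (ri : Fin H → S → (∀ l, A l) → ℝ) : ℕ → S → ℝ :=
  fun h s =>
    if hh : h < H then
      ∑ a : ∀ l, A l, π ⟨h, hh⟩ s a *
        (ri ⟨h, hh⟩ s a + ∑ s' : S, P ⟨h, hh⟩ s a s' * Vpol P π ri (h + 1) s')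
    else 0
  termination_by h _ => H - h
  decreasing_by omega

/-- Value of a deterministic Markov deviation `d : {1,…,H} × S → A i` of player `i`:
`V^d_{H+1} = 0` and
`V^d_h(s) = ∑_a π_h(s)(a) [ rᵢ_h(s,(d(h,s),a_{-i})) + ∑_{s'} P_h(s,(d(h,s),a_{-i}))(s') V^d_{h+1}(s') ]`. -/
noncomputable def Vdev (P : Fin H → S → (∀ l, A l) → S → ℝ)
    (π : Fin H → S → (∀ l, A l) → ℝ)
    (ri : Fin H → S → (∀ l, A l) → ℝ)
    (i : Fin n) (d : Fin H → S → A i) : ℕ → S → ℝ :=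
  fun h s =>
    if hh : h < H then
      ∑ a : ∀ l, A l, π ⟨h, hh⟩ s a *
        (ri ⟨h, hh⟩ s (joinA i (d ⟨h, hh⟩ s) (restr i a)) +
          ∑ s' : S, P ⟨h, hh⟩ s (joinA i (d ⟨h, hh⟩ s) (restr i a)) s' *
            Vdev P π ri i d (h + 1) s')
    else 0
  termination_by h _ => H - h
  decreasing_by omega

end MG


section Euclidean

variable {X : Type*} [Fintype X]

lemma norm2_eq_norm_toLp (f : X → ℝ) : norm2 f = ‖WithLp.toLp 2 f‖ := by
  simp only [norm2, EuclideanSpace.norm_eq, Real.norm_eq_abs, sq_abs]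

lemma inner2_eq_inner_toLp (f g : X → ℝ) :
    inner2 f g = inner ℝ (WithLp.toLp 2 f) (WithLp.toLp 2 g) := by
  simp only [inner2, PiLp.inner_apply, RCLike.inner_apply, conj_trivial, mul_comm]

lemma norm2_nonneg (f : X → ℝ) : 0 ≤ norm2 f := Real.sqrt_nonneg _

lemma sq_norm2 (f : X → ℝ) : norm2 f ^ 2 = ∑ x, f x ^ 2 :=
  Real.sq_sqrt (Finset.sum_nonneg fun _ _ => sq_nonneg _)

lemma abs_le_norm2 (f : X → ℝ) (x : X) : |f x| ≤ norm2 f := by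
  rw [← Real.sqrt_sq_eq_abs]
  exact Real.sqrt_le_sqrt (Finset.single_le_sum (fun y _ => sq_nonneg (f y)) (Finset.mem_univ x))

lemma norm2_pos_of_sum_eq_one {f : X → ℝ} (hf : ∑ x, f x = 1) : 0 < norm2 f := by
  obtain ⟨x, hx⟩ : ∃ x, f x ≠ 0 := by
    by_contra! h
    simp [h] at hf
  exact Real.sqrt_pos.2
    (Finset.sum_pos' (fun _ _ => sq_nonneg _) ⟨x, Finset.mem_univ x, by positivity⟩)

lemma inner2_le_norm2_mul_norm2 (f g : X → ℝ) : inner2 f g ≤ norm2 f * norm2 g := by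
  rw [inner2_eq_inner_toLp, norm2_eq_norm_toLp, norm2_eq_norm_toLp]
  exact real_inner_le_norm _ _

/-- Equality in Cauchy–Schwarz forces proportionality, and the normalisation `∑ = 1` fixes the
factor to be `1`. -/
lemma inner2_lt_norm2_mul_norm2 {f g : X → ℝ} (hf : ∑ x, f x = 1) (hg : ∑ x, g x = 1)
    (hfg : f ≠ g) : inner2 f g < norm2 f * norm2 g := by
  refine (inner2_le_norm2_mul_norm2 f g).lt_of_ne fun h => hfg ?_
  rw [inner2_eq_inner_toLp, norm2_eq_norm_toLp, norm2_eq_norm_toLp,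
    inner_eq_norm_mul_iff_real, ← norm2_eq_norm_toLp, ← norm2_eq_norm_toLp] at h
  have hpt : ∀ x, norm2 g * f x = norm2 f * g x := fun x => by
    simpa using congrArg (fun v => v x) h
  have hnorm : norm2 g = norm2 f := by
    simpa [← Finset.mul_sum, hf, hg] using Finset.sum_congr rfl fun x (_ : x ∈ Finset.univ) => hpt x
  funext x
  exact mul_left_cancel₀ (norm2_pos_of_sum_eq_one hf).ne' (hnorm ▸ hpt x)

end Euclidean

section JointAction

variable {n : ℕ} {A : Fin n → Type*}

@[simp] lemma joinA_apply_self (i : Fin n) (j : A i) (b : ∀ l : {l : Fin n // l ≠ i}, A l) :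
    joinA i j b i = j := by
  simp [joinA]

@[simp] lemma restr_joinA (i : Fin n) (j : A i) (b : ∀ l : {l : Fin n // l ≠ i}, A l) :
    restr i (joinA i j b) = b := by
  funext l
  simp [restr, joinA, l.2]

@[simp] lemma joinA_restr (i : Fin n) (a : ∀ l, A l) : joinA i (a i) (restr i a) = a := by
  funext l
  by_cases h : l = i
  · subst h; simp [joinA]
  · simp [joinA, h, restr]

def joinAEquiv (i : Fin n) : (A i × ∀ l : {l : Fin n // l ≠ i}, A l) ≃ ∀ l, A l where
  toFun p := joinA i p.1 p.2
  invFun a := (a i, restr i a)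
  left_inv p := by simp
  right_inv a := by simp

lemma sum_eq_sum_sum_joinA [∀ l, Fintype (A l)] (i : Fin n) (f : (∀ l, A l) → ℝ) :
    ∑ a, f a = ∑ j : A i, ∑ b, f (joinA i j b) := by
  rw [← (joinAEquiv i).sum_comp, Fintype.sum_prod_type]
  rfl

end JointAction

section Stage

variable {n : ℕ} {A : Fin n → Type*} [∀ l, Fintype (A l)] {σ : (∀ l, A l) → ℝ} {i : Fin n}

def SupportSeparated (σ : (∀ l, A l) → ℝ) (i : Fin n) : Prop :=
  (∃! j : A i, 0 < marg σ i j) ∨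
    ∃ j k : A i, j ≠ k ∧ 0 < marg σ i j ∧ 0 < marg σ i k ∧ condl σ i j ≠ condl σ i k

lemma marg_nonneg (hσ : ∀ a, 0 ≤ σ a) (j : A i) : 0 ≤ marg σ i j :=
  Finset.sum_nonneg fun _ _ => hσ _

lemma sum_marg : ∑ j : A i, marg σ i j = ∑ a, σ a := (sum_eq_sum_sum_joinA i σ).symm

lemma condl_nonneg (hσ : ∀ a, 0 ≤ σ a) (j : A i) (b : ∀ l : {l : Fin n // l ≠ i}, A l) :
    0 ≤ condl σ i j b := by
  unfold condl
  split_ifs with h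
  exacts [div_nonneg (hσ _) h.le, le_rfl]

lemma sum_condl {j : A i} (h : 0 < marg σ i j) : ∑ b, condl σ i j b = 1 := by
  simp only [condl, if_pos h, ← Finset.sum_div]
  exact div_self h.ne'

lemma condl_eq_zero {j : A i} (h : ¬ 0 < marg σ i j) : condl σ i j = 0 := by
  funext b
  simp [condl, h]

lemma marg_mul_condl (hσ : ∀ a, 0 ≤ σ a) (j : A i) (b : ∀ l : {l : Fin n // l ≠ i}, A l) :
    marg σ i j * condl σ i j b = σ (joinA i j b) := by
  by_cases h : 0 < marg σ i j
  · rw [condl, if_pos h, mul_div_cancel₀ _ h.ne']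
  · have h0 : marg σ i j = 0 := le_antisymm (not_lt.1 h) (marg_nonneg hσ j)
    rw [h0, zero_mul]
    exact ((Finset.sum_eq_zero_iff_of_nonneg fun b _ => hσ _).1 h0 b (Finset.mem_univ _)).symm

-- Off the support both sides vanish: there `condl σ i j = 0`.
lemma wit_joinA (j : A i) (b : ∀ l : {l : Fin n // l ≠ i}, A l) :
    wit σ i (joinA i j b) = condl σ i j b / norm2 (condl σ i j) := by
  by_cases h : 0 < marg σ i j
  · simp [wit, h]
  · simp [wit, h, condl_eq_zero h]

lemma wit_nonneg (hσ : ∀ a, 0 ≤ σ a) (a : ∀ l, A l) : 0 ≤ wit σ i a := by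
  rw [← joinA_restr i a, wit_joinA]
  exact div_nonneg (condl_nonneg hσ _ _) (norm2_nonneg _)

lemma wit_le_one (a : ∀ l, A l) : wit σ i a ≤ 1 := by
  rw [← joinA_restr i a, wit_joinA]
  exact div_le_one_of_le₀ ((le_abs_self _).trans (abs_le_norm2 _ _)) (norm2_nonneg _)

-- The case split in `tq` is invisible because `x / 0 = 0`.
lemma tq_eq (j k : A i) :
    tq σ i j k =
      norm2 (condl σ i j) - inner2 (condl σ i j) (condl σ i k) / norm2 (condl σ i k) := by
  unfold tq
  split_ifs with h
  · simp [h, inner2]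
  · rfl

lemma tq_nonneg (j k : A i) : 0 ≤ tq σ i j k := by
  rw [tq_eq, sub_nonneg]
  rcases (norm2_nonneg (condl σ i k)).eq_or_lt with h | h
  · rw [← h, div_zero]
    exact norm2_nonneg _
  · exact (div_le_iff₀ h).2 (inner2_le_norm2_mul_norm2 _ _)

lemma tq_pos {j k : A i} (hj : 0 < marg σ i j)
    (hjk : condl σ i j ≠ condl σ i k) : 0 < tq σ i j k := by
  by_cases hk : 0 < marg σ i k
  · have hnk := norm2_pos_of_sum_eq_one (sum_condl hk)
    rw [tq_eq, sub_pos, div_lt_iff₀ hnk]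
    exact inner2_lt_norm2_mul_norm2 (sum_condl hj) (sum_condl hk) hjk
  · rw [tq, if_pos (condl_eq_zero hk)]
    exact norm2_pos_of_sum_eq_one (sum_condl hj)

lemma IsMixed.marg_eq_one (hσ : IsMixed σ) {j : A i} (hj : ∀ k, 0 < marg σ i k → k = j) :
    marg σ i j = 1 := by
  rw [← hσ.2, ← sum_marg, Finset.sum_eq_single j _ (by simp)]
  intro k _ hkj
  exact le_antisymm (not_lt.1 fun hk => hkj (hj k hk)) (marg_nonneg hσ.1 k)

lemma IsMixed.exists_marg_pos (hσ : IsMixed σ) (i : Fin n) : ∃ k : A i, 0 < marg σ i k := by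
  by_contra! h
  have : ∑ k : A i, marg σ i k ≤ 0 := Finset.sum_nonpos fun k _ => h k
  rw [sum_marg, hσ.2] at this
  exact one_pos.not_ge this

lemma SupportSeparated.exists_condl_ne (hσ : IsMixed σ) (hc : SupportSeparated σ i) {j : A i}
    (hj : marg σ i j < 1) : ∃ k, 0 < marg σ i k ∧ condl σ i k ≠ condl σ i j := by
  by_cases hpj : 0 < marg σ i j
  · rcases hc with ⟨j₀, -, hu⟩ | ⟨j₁, k₁, -, h₁, h₂, hne⟩
    · have : j = j₀ := hu j hpj
      subst this
      exact absurd (hσ.marg_eq_one hu) hj.ne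
    · by_cases h : condl σ i j₁ = condl σ i j
      · exact ⟨k₁, h₂, fun e => hne (h.trans e.symm)⟩
      · exact ⟨j₁, h₁, h⟩
  · obtain ⟨k, hk⟩ := hσ.exists_marg_pos i
    refine ⟨k, hk, fun e => ?_⟩
    simpa [e, condl_eq_zero hpj] using sum_condl hk

end Stage

section WitnessValue

variable {n : ℕ} {A : Fin n → Type*} [∀ l, Fintype (A l)] {σ : (∀ l, A l) → ℝ} {i : Fin n}

noncomputable def witValue (σ : (∀ l, A l) → ℝ) (i : Fin n) : ℝ :=
  ∑ a, σ a * wit σ i a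

noncomputable def witDevValue (σ : (∀ l, A l) → ℝ) (i : Fin n) (j : A i) : ℝ :=
  ∑ a, σ a * wit σ i (joinA i j (restr i a))

lemma witValue_sub_witDevValue (hσ : ∀ a, 0 ≤ σ a) (j : A i) :
    witValue σ i - witDevValue σ i j = ∑ k, marg σ i k * tq σ i k j := by
  rw [witValue, witDevValue, ← Finset.sum_sub_distrib, sum_eq_sum_sum_joinA i]
  refine Finset.sum_congr rfl fun k _ => ?_
  simp only [← marg_mul_condl hσ, restr_joinA, wit_joinA]
  calc ∑ b, (marg σ i k * condl σ i k b * (condl σ i k b / norm2 (condl σ i k)) -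
          marg σ i k * condl σ i k b * (condl σ i j b / norm2 (condl σ i j)))
      = marg σ i k * ((∑ b, condl σ i k b ^ 2) / norm2 (condl σ i k) -
          (∑ b, condl σ i k b * condl σ i j b) / norm2 (condl σ i j)) := by
        rw [Finset.sum_div, Finset.sum_div, ← Finset.sum_sub_distrib, Finset.mul_sum]
        exact Finset.sum_congr rfl fun b _ => by ring
    _ = marg σ i k * tq σ i k j := by
        rw [tq_eq, inner2, ← sq_norm2, sq, mul_self_div_self]

lemma witDevValue_lt_witValue (hσ : IsMixed σ) (hc : SupportSeparated σ i) {j : A i}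
    (hj : marg σ i j < 1) : witDevValue σ i j < witValue σ i := by
  obtain ⟨k, hk, hkj⟩ := hc.exists_condl_ne hσ hj
  rw [← sub_pos, witValue_sub_witDevValue hσ.1]
  exact Finset.sum_pos' (fun l _ => mul_nonneg (marg_nonneg hσ.1 l) (tq_nonneg l j))
    ⟨k, Finset.mem_univ k, mul_pos hk (tq_pos hk hkj)⟩

lemma exists_pos_forall_le_of_finite {ι : Type*} [Finite ι] {f : ι → ℝ} (hf : ∀ x, 0 < f x) :
    ∃ δ, 0 < δ ∧ ∀ x, δ ≤ f x := by
  cases isEmpty_or_nonempty ι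
  · exact ⟨1, one_pos, isEmptyElim⟩
  · obtain ⟨x₀, hx₀⟩ := Finite.exists_min f
    exact ⟨f x₀, hf x₀, hx₀⟩

lemma exists_uniform_witValue_gap {S : Type*} [Fintype S] {H : ℕ}
    {π : Fin H → S → (∀ l, A l) → ℝ} (hπ : ∀ h s, IsMixed (π h s))
    (hc : ∀ h s i, SupportSeparated (π h s) i) :
    ∃ δ, 0 < δ ∧ ∀ h s i (j : A i), marg (π h s) i j < 1 →
      δ ≤ witValue (π h s) i - witDevValue (π h s) i j := by
  let Deviation := {x : Fin H × S × Σ i, A i // marg (π x.1 x.2.1) x.2.2.1 x.2.2.2 < 1}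
  obtain ⟨δ, hδ, hle⟩ := exists_pos_forall_le_of_finite (ι := Deviation)
    (f := fun x => witValue (π x.1.1 x.1.2.1) x.1.2.2.1 -
      witDevValue (π x.1.1 x.1.2.1) x.1.2.2.1 x.1.2.2.2)
    fun x => sub_pos.2 (witDevValue_lt_witValue (hπ _ _) (hc _ _ _) x.2)
  exact ⟨δ, hδ, fun h s i j hj => hle ⟨(h, s, ⟨i, j⟩), hj⟩⟩

end WitnessValue

section Bellman

variable {S X : Type*} [Fintype S] [Fintype X]

lemma IsMixed.abs_sum_mul_le {p f : X → ℝ} (hp : IsMixed p) {M : ℝ} (hf : ∀ x, |f x| ≤ M) :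
    |∑ x, p x * f x| ≤ M :=
  calc |∑ x, p x * f x| ≤ ∑ x, p x * |f x| := by
        refine (Finset.abs_sum_le_sum_abs _ _).trans_eq (Finset.sum_congr rfl fun x _ => ?_)
        rw [abs_mul, abs_of_nonneg (hp.1 x)]
    _ ≤ ∑ x, p x * M := Finset.sum_le_sum fun x _ => mul_le_mul_of_nonneg_left (hf x) (hp.1 x)
    _ = M := by rw [← Finset.sum_mul, hp.2, one_mul]

lemma abs_le_of_bellman {H : ℕ} {π : Fin H → S → X → ℝ} (hπ : ∀ h s, IsMixed (π h s))
    {G : Fin H → S → X → S → ℝ} (hG : ∀ h s a, IsMixed (G h s a))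
    {F : Fin H → S → X → ℝ} {B C γ : ℝ} (hC : 0 ≤ C) (hγ : 0 ≤ γ) (hBC : B + C * γ ≤ C)
    (hF : ∀ h s a, |F h s a| ≤ B * γ ^ (h : ℕ)) {V : ℕ → S → ℝ}
    (hV : ∀ h s, V h s = if hh : h < H then
        ∑ a, π ⟨h, hh⟩ s a * (F ⟨h, hh⟩ s a + ∑ s', G ⟨h, hh⟩ s a s' * V (h + 1) s')
      else 0)
    (h : ℕ) (s : S) : |V h s| ≤ C * γ ^ h := by
  suffices ∀ m h s, H ≤ h + m → |V h s| ≤ C * γ ^ h from this H h s (by omega)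
  intro m
  induction m with
  | zero =>
    intro h s hm
    rw [hV, dif_neg (by omega), abs_zero]
    positivity
  | succ m ih =>
    intro h s hm
    rw [hV]
    split_ifs with hh
    · refine (hπ _ s).abs_sum_mul_le fun a => ?_
      calc |F ⟨h, hh⟩ s a + ∑ s', G ⟨h, hh⟩ s a s' * V (h + 1) s'|
          ≤ B * γ ^ h + C * γ ^ (h + 1) :=
            (abs_add_le _ _).trans (add_le_add (hF _ s a)
              ((hG _ s a).abs_sum_mul_le fun s' => ih (h + 1) s' (by omega)))
        _ = (B + C * γ) * γ ^ h := by ring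
        _ ≤ C * γ ^ h := mul_le_mul_of_nonneg_right hBC (pow_nonneg hγ h)
    · rw [abs_zero]
      positivity

lemma bellman_step_lt {p : X → ℝ} (hp : IsMixed p) {F₁ F₂ : X → ℝ} {G₁ G₂ : X → S → ℝ}
    (hG₁ : ∀ a, IsMixed (G₁ a)) (hG₂ : ∀ a, IsMixed (G₂ a)) {V₁ V₂ : S → ℝ} {M : ℝ}
    (hV₁ : ∀ s, |V₁ s| ≤ M) (hV₂ : ∀ s, |V₂ s| ≤ M)
    (hgap : 2 * M < ∑ a, p a * F₁ a - ∑ a, p a * F₂ a) :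
    ∑ a, p a * (F₂ a + ∑ s, G₂ a s * V₂ s) < ∑ a, p a * (F₁ a + ∑ s, G₁ a s * V₁ s) := by
  have h₁ := hp.abs_sum_mul_le fun a => (hG₁ a).abs_sum_mul_le hV₁
  have h₂ := hp.abs_sum_mul_le fun a => (hG₂ a).abs_sum_mul_le hV₂
  simp only [mul_add, Finset.sum_add_distrib]
  linarith [abs_le.1 h₁, abs_le.1 h₂]

end Bellman

section Installation

variable {n : ℕ} {A : Fin n → Type*} [∀ l, Fintype (A l)] {S : Type*} {H : ℕ}

noncomputable def witReward (π : Fin H → S → (∀ l, A l) → ℝ) (B γ : ℝ) (i : Fin n) :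
    Fin H → S → (∀ l, A l) → ℝ :=
  fun h s a => B * γ ^ (h : ℕ) * wit (π h s) i a

lemma abs_witReward_le {π : Fin H → S → (∀ l, A l) → ℝ} (hπ : ∀ h s a, 0 ≤ π h s a)
    {B γ : ℝ} (hB : 0 ≤ B) (hγ : 0 ≤ γ) (i : Fin n) (h : Fin H) (s : S) (a : ∀ l, A l) :
    |witReward π B γ i h s a| ≤ B * γ ^ (h : ℕ) := by
  have hw := wit_nonneg (hπ h s) (i := i) a
  rw [witReward, abs_of_nonneg (by positivity)]
  exact mul_le_of_le_one_right (by positivity) (wit_le_one a)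

lemma witReward_sub_witReward_joinA (π : Fin H → S → (∀ l, A l) → ℝ) (B γ : ℝ) (i : Fin n)
    (h : Fin H) (s : S) (j : A i) :
    ∑ a, π h s a * witReward π B γ i h s a -
        ∑ a, π h s a * witReward π B γ i h s (joinA i j (restr i a)) =
      B * γ ^ (h : ℕ) * (witValue (π h s) i - witDevValue (π h s) i j) := by
  simp only [witReward, witValue, witDevValue, mul_sub, Finset.mul_sum]
  congr 1 <;> exact Finset.sum_congr rfl fun a _ => by ring

lemma abs_Vpol_le [Fintype S] {P : Fin H → S → (∀ l, A l) → S → ℝ} (hP : ∀ h s a, IsMixed (P h s a))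
    {π : Fin H → S → (∀ l, A l) → ℝ} (hπ : ∀ h s, IsMixed (π h s))
    {ri : Fin H → S → (∀ l, A l) → ℝ} {B C γ : ℝ} (hC : 0 ≤ C) (hγ : 0 ≤ γ)
    (hBC : B + C * γ ≤ C) (hri : ∀ h s a, |ri h s a| ≤ B * γ ^ (h : ℕ)) (h : ℕ) (s : S) :
    |Vpol P π ri h s| ≤ C * γ ^ h :=
  abs_le_of_bellman hπ hP hC hγ hBC hri (fun h s => by rw [Vpol]) h s

lemma abs_Vdev_le [Fintype S] {P : Fin H → S → (∀ l, A l) → S → ℝ} (hP : ∀ h s a, IsMixed (P h s a))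
    {π : Fin H → S → (∀ l, A l) → ℝ} (hπ : ∀ h s, IsMixed (π h s))
    {ri : Fin H → S → (∀ l, A l) → ℝ} {B C γ : ℝ} (hC : 0 ≤ C) (hγ : 0 ≤ γ)
    (hBC : B + C * γ ≤ C) (hri : ∀ h s a, |ri h s a| ≤ B * γ ^ (h : ℕ))
    (i : Fin n) (d : Fin H → S → A i) (h : ℕ) (s : S) :
    |Vdev P π ri i d h s| ≤ C * γ ^ h :=
  abs_le_of_bellman hπ (G := fun h s a => P h s (joinA i (d h s) (restr i a)))
    (fun h s a => hP h s _) (F := fun h s a => ri h s (joinA i (d h s) (restr i a))) hC hγ hBC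
    (fun h s a => hri h s _) (fun h s => by rw [Vdev]) h s

end Installation

theorem sMPCCE_installable_general {n : ℕ} {A : Fin n → Type*}
    [∀ l, Fintype (A l)]
    {S : Type*} [Fintype S] {H : ℕ}
    (P : Fin H → S → (∀ l, A l) → S → ℝ)
    (hP : ∀ h s a, (∀ s', 0 ≤ P h s a s') ∧ ∑ s' : S, P h s a s' = 1)
    (π : Fin H → S → (∀ l, A l) → ℝ)
    (hπ : ∀ h s, IsMixed (π h s))
    (hc : ∀ h : Fin H, ∀ s : S, ∀ i : Fin n,
      (∃! j : A i, 0 < marg (π h s) i j) ∨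
      (∃ j k : A i, j ≠ k ∧ 0 < marg (π h s) i j ∧ 0 < marg (π h s) i k ∧
        condl (π h s) i j ≠ condl (π h s) i k)) :
    ∀ B : ℝ, 0 < B →
      ∃ r : Fin n → Fin H → S → (∀ l, A l) → ℝ,
        (∀ i h s a, |r i h s a| ≤ B) ∧
        ∀ i : Fin n, ∀ h : ℕ, h < H → ∀ s : S, ∀ d : Fin H → S → A i,
          (∀ (h' : Fin H) (s' : S), marg (π h' s') i (d h' s') < 1) →
          Vdev P π (r i) i d h s < Vpol P π (r i) h s := by
  intro B hB
  obtain ⟨δ, hδ, hgap⟩ := exists_uniform_witValue_gap hπ hc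
  obtain ⟨γ, hγ, hγ_half, hγδ⟩ : ∃ γ : ℝ, 0 < γ ∧ γ ≤ 1 / 2 ∧ 4 * γ < δ :=
    ⟨min (1 / 2) (δ / 8), by positivity, min_le_left _ _,
      by linarith [min_le_right (1 / 2) (δ / 8)]⟩
  have hr := abs_witReward_le (fun h s => (hπ h s).1) hB.le hγ.le
  have hBC : B + 2 * B * γ ≤ 2 * B := by linarith [mul_le_mul_of_nonneg_left hγ_half hB.le]
  refine ⟨witReward π B γ, fun i h s a => (hr i h s a).trans ?_, fun i h hh s d hd => ?_⟩
  · exact mul_le_of_le_one_right hB.le (pow_le_one₀ hγ.le (by linarith))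
  rw [Vdev, Vpol, dif_pos hh, dif_pos hh]
  refine bellman_step_lt (hπ _ s) (fun a => hP _ s a) (fun a => hP _ s _)
    (abs_Vpol_le hP hπ (by positivity) hγ.le hBC (hr i) (h + 1))
    (abs_Vdev_le hP hπ (by positivity) hγ.le hBC (hr i) i d (h + 1)) ?_
  rw [witReward_sub_witReward_joinA]
  calc 2 * (2 * B * γ ^ (h + 1)) = B * γ ^ h * (4 * γ) := by ring
    _ < B * γ ^ h * δ := mul_lt_mul_of_pos_left hγδ (by positivity)
    _ ≤ _ := mul_le_mul_of_nonneg_left (hgap _ s i _ (hd _ s)) (by positivity)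

/-- **sMPCCE installability (Theorem `sMPCCE`).** If at every stage `(h, s)` and for every
player `i` the stage distribution `π_h(s)` either supports exactly one action of `A i` or
supports two actions with differing stage conditionals, then for every reward bound `B > 0`
there is a bounded reward function `r` such that for every player `i`, stage `(h, s)`, and
deterministic Markov deviation `d` whose prescribed action always has stage marginal `< 1`,
we have `V^π_{i,h}(s) > V^d_{i,h}(s)`. -/
theorem sMPCCE_installable {n : ℕ} {A : Fin n → Type*}
    [∀ l, Fintype (A l)] [∀ l, Nonempty (A l)]
    {S : Type*} [Fintype S] [Nonempty S] {H : ℕ}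
    (P : Fin H → S → (∀ l, A l) → S → ℝ)
    (hP : ∀ h s a, (∀ s', 0 ≤ P h s a s') ∧ ∑ s' : S, P h s a s' = 1)
    (π : Fin H → S → (∀ l, A l) → ℝ)
    (hπ : ∀ h s, IsMixed (π h s))
    (hc : ∀ h : Fin H, ∀ s : S, ∀ i : Fin n,
      (∃! j : A i, 0 < marg (π h s) i j) ∨
      (∃ j k : A i, j ≠ k ∧ 0 < marg (π h s) i j ∧ 0 < marg (π h s) i k ∧
        condl (π h s) i j ≠ condl (π h s) i k)) :
    ∀ B : ℝ, 0 < B →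
      ∃ r : Fin n → Fin H → S → (∀ l, A l) → ℝ,
        (∀ i h s a, |r i h s a| ≤ B) ∧
        ∀ i : Fin n, ∀ h : ℕ, h < H → ∀ s : S, ∀ d : Fin H → S → A i,
          (∀ (h' : Fin H) (s' : S), marg (π h' s') i (d h' s') < 1) →
          Vdev P π (r i) i d h s < Vpol P π (r i) h s :=
  sMPCCE_installable_general P hP π hπ hc
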